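/- There exist constants c, C > 0 and an integer K ≥ 1, depending only on n, such that the following holds. Let ζ ∈ B_n with 0 < δ := 1 − |ζ| ≤ 1/4, let k ≥ K be an integer with 2^k δ ≤ 1, and set ζ_j = ((1 − 2^j δ)/(1 − δ)) ζ for j = k−1, k. Then for every z ∈ S_ζ and every w ∈ S_{ζ_k} \ S_{ζ_{k−1}}: c · 2^k δ ≤ |1 − ⟨w, z⟩| ≤ C · 2^k δ and c · 2^k δ ≤ √△(w,z) ≤ C · 2^k δ, where △(w,z) = |1−⟨w,z⟩|² − (1−|w|²)(1−|z|²). -/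

import Mathlib

open MeasureTheory Metric Set Complex Topology
open scoped ENNReal NNReal

noncomputable section

/-- `ℂⁿ` with the Euclidean (Hermitian) norm: the ball `B_n` is `Metric.ball 0 1`. -/
abbrev En (n : ℕ) : Type := EuclideanSpace ℂ (Fin n)

instance (n : ℕ) : MeasurableSpace (En n) := borel _
instance (n : ℕ) : BorelSpace (En n) := ⟨rfl⟩

/-- The Hilbert space `ℓ²` of square-summable complex sequences. -/
abbrev l2 : Type := lp (fun _ : ℕ => ℂ) 2

/-- The pairing `⟨z,w⟩ = ∑_j z_j conj (w_j)`. -/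
def herm {n : ℕ} (z w : En n) : ℂ := ∑ j, z j * (starRingEnd ℂ) (w j)

/-- The Carleson tent `S_ζ`. -/
def tent {n : ℕ} (ζ : En n) : Set (En n) :=
  {z ∈ ball (0 : En n) 1 | 1 / 2 < (1 - ‖ζ‖) / ‖1 - herm z ζ‖}

/-- The measure `λ_n` on `B_n`, `dλ_n(z) = (1-|z|²)^{-n-1} dV(z)`. -/
def lambdaM (n : ℕ) : Measure (En n) :=
  ((volume : Measure (En n)).restrict (ball (0 : En n) 1)).withDensity
    fun z => ENNReal.ofReal ((1 - ‖z‖ ^ 2) ^ (-(n : ℝ) - 1))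

/-- The normalized rotation-invariant surface measure `σ` on the unit sphere `∂B_n`. -/
def sphereM (n : ℕ) : Measure (sphere (0 : En n) 1) :=
  (((volume : Measure (En n)).toSphere) Set.univ)⁻¹ • ((volume : Measure (En n)).toSphere)

/-- The squared Hilbert–Schmidt norm of the holomorphic derivative `f′(z) = (∂f_i/∂z_j)`. -/
def hsSq {n : ℕ} (f : En n → l2) (z : En n) : ℝ :=
  ∑' i : ℕ, ∑ j, ‖(fderiv ℂ f z (EuclideanSpace.single j 1)) i‖ ^ 2

/-- The squared Carleson-measure norm `‖g‖_CM²` of a scalar function on the ball. -/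
def cmSq {n : ℕ} (g : En n → ℝ) : ℝ≥0∞ :=
  ⨆ (ζ : En n) (_ : ζ ∈ ball (0 : En n) 1 \ {0}),
    (ENNReal.ofReal ((1 - ‖ζ‖) ^ n))⁻¹ *
      ∫⁻ z in tent ζ, ENNReal.ofReal ((g z) ^ 2) ∂(lambdaM n)

/-- `△(w,z) = |1-⟨w,z⟩|² - (1-|w|²)(1-|z|²)`. -/
def trid {n : ℕ} (w z : En n) : ℝ :=
  ‖1 - herm w z‖ ^ 2 - (1 - ‖w‖ ^ 2) * (1 - ‖z‖ ^ 2)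

set_option maxHeartbeats 1000000

section Helpers
variable {n : ℕ}

lemma herm_eq_inner (z w : En n) : herm z w = (inner ℂ w z : ℂ) := by
  simp [herm, PiLp.inner_apply, RCLike.inner_apply, mul_comm]

lemma norm_herm_le (z w : En n) : ‖herm z w‖ ≤ ‖z‖ * ‖w‖ := by
  rw [herm_eq_inner, mul_comm]; exact norm_inner_le_norm (𝕜 := ℂ) w z

lemma herm_sub_left (a b z : En n) : herm (a - b) z = herm a z - herm b z := by
  simp [herm, sub_mul, Finset.sum_sub_distrib]

lemma herm_sub_right (z a b : En n) : herm z (a - b) = herm z a - herm z b := by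
  simp [herm, map_sub, mul_sub, Finset.sum_sub_distrib]

lemma herm_self (c : En n) : herm c c = (‖c‖ : ℂ) ^ 2 := by
  rw [herm_eq_inner]
  exact_mod_cast inner_self_eq_norm_sq_to_K (𝕜 := ℂ) c

lemma herm_smul_right (z w : En n) (r : ℝ) : herm z (r • w) = (r : ℂ) * herm z w := by
  unfold herm
  rw [Finset.mul_sum]
  refine Finset.sum_congr rfl fun j _ => ?_
  simp [PiLp.smul_apply, Complex.real_smul, map_mul, Complex.conj_ofReal]
  ring

lemma herm_conj (z w : En n) : herm w z = (starRingEnd ℂ) (herm z w) := by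
  simp [herm, map_sum, map_mul, mul_comm]

lemma norm_one_sub_herm_comm (z w : En n) : ‖1 - herm z w‖ = ‖1 - herm w z‖ := by
  have h : (1 : ℂ) - herm w z = star (1 - herm z w) := by
    rw [herm_conj z w, starRingEnd_apply]
    simp [star_sub]
  rw [h, norm_star]

lemma one_sub_norm_mul_le (a b : En n) : 1 - ‖a‖ * ‖b‖ ≤ ‖1 - herm a b‖ := by
  have h1 : (1 - herm a b).re ≤ ‖1 - herm a b‖ := Complex.re_le_norm _
  have h2 : (herm a b).re ≤ ‖a‖ * ‖b‖ := le_trans (Complex.re_le_norm _) (norm_herm_le a b)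
  simp only [Complex.sub_re, Complex.one_re] at h1
  linarith

lemma one_sub_herm_pos (a b : En n) (ha : ‖a‖ < 1) (hb : ‖b‖ ≤ 1) :
    0 < ‖1 - herm a b‖ := by
  have h := one_sub_norm_mul_le a b
  have h2 : ‖a‖ * ‖b‖ ≤ ‖a‖ := mul_le_of_le_one_right (norm_nonneg a) hb
  linarith

lemma tent_lt {η z : En n} (hz : z ∈ tent η) (hη : ‖η‖ ≤ 1) :
    ‖z‖ < 1 ∧ ‖1 - herm z η‖ < 2 * (1 - ‖η‖) := by
  obtain ⟨hz1, hz2⟩ := hz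
  rw [mem_ball_zero_iff] at hz1
  have hpos := one_sub_herm_pos z η hz1 hη
  rw [lt_div_iff₀ hpos] at hz2
  exact ⟨hz1, by linarith⟩

lemma not_tent_ge {η w : En n} (hw : w ∉ tent η) (hwb : ‖w‖ < 1) (hη : ‖η‖ ≤ 1) :
    2 * (1 - ‖η‖) ≤ ‖1 - herm w η‖ := by
  have hpos := one_sub_herm_pos w η hwb hη
  by_contra h
  push_neg at h
  exact hw ⟨mem_ball_zero_iff.mpr hwb, by rw [lt_div_iff₀ hpos]; linarith⟩

lemma norm_sub_sq_le' (a c : En n) (ha : ‖a‖ ≤ 1) (hc : ‖c‖ = 1) :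
    ‖a - c‖ ^ 2 ≤ 2 * ‖1 - herm a c‖ := by
  have hexp : ‖a - c‖ ^ 2 = ‖a‖ ^ 2 - 2 * (inner ℂ a c : ℂ).re + ‖c‖ ^ 2 := by
    have := @norm_sub_sq ℂ _ _ _ _ a c
    simpa using this
  have hre : (inner ℂ a c : ℂ).re = (herm a c).re := by
    rw [herm_eq_inner, ← inner_conj_symm a c]
    simp only [Complex.conj_re]
  have h1 : (1 - herm a c).re ≤ ‖1 - herm a c‖ := Complex.re_le_norm _
  simp only [Complex.sub_re, Complex.one_re] at h1
  rw [hexp, hc, hre]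
  nlinarith [norm_nonneg a]

lemma herm_decomp (a b c : En n) (hc : ‖c‖ = 1) :
    1 - herm a b = (1 - herm a c) + (1 - herm c b) - herm (a - c) (b - c) := by
  have h := herm_self c
  rw [hc] at h
  rw [herm_sub_left, herm_sub_right, herm_sub_right, h]
  push_cast
  ring

lemma aux_t_bound {δ ρ : ℝ} (hδ0 : 0 < δ) (hδ4 : δ ≤ 1/4) (hρ0 : 0 < ρ) :
    ρ - δ ≤ 4/3*ρ*(1-δ) := by nlinarith

lemma aux_scale_up {δ ρ A R : ℝ} (hδ0 : 0 < δ) (hδ4 : δ ≤ 1/4) (hA0 : 0 ≤ A)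
    (heq : (1-δ)*A = R) (hR : R ≤ (10/3)*ρ + δ) (hδρ : δ*1048576 ≤ ρ) : A ≤ 5*ρ := by
  nlinarith

lemma aux_scale_low {δ ρ A R : ℝ} (hδ0 : 0 < δ) (hδ4 : δ ≤ 1/4) (hA0 : 0 ≤ A)
    (heq : (1-δ)*A = R) (hR : ρ/3 - δ ≤ R) (hδρ : δ*1048576 ≤ ρ) : ρ/4 ≤ A := by
  nlinarith

lemma aux_scale_B {δ B R : ℝ} (hδ0 : 0 < δ) (hδ4 : δ ≤ 1/4) (hB0 : 0 ≤ B)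
    (heq : (1-δ)*B = R) (hR : R ≤ 3*δ) : B ≤ 4*δ := by
  nlinarith

lemma aux_sq_small {s ρ δ : ℝ} (hρ0 : 0 < ρ) (hδ0 : 0 < δ)
    (h1 : s^2 ≤ 80*ρ*δ) (h2 : δ*1048576 ≤ ρ) : s^2 ≤ (ρ/100)^2 := by
  nlinarith [mul_le_mul_of_nonneg_left h2 hρ0.le]

lemma aux_size {x R ρ : ℝ} (hx0 : 0 ≤ x) (hx1 : x < 1) (hρ0 : 0 < ρ)
    (h1 : 1 - x*(1-ρ) ≤ R) (h2 : R < 2*ρ) : 1 - x^2 ≤ 4*ρ := by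
  nlinarith

lemma aux_one_sub_sq {x : ℝ} (h0 : 0 ≤ x) (h1 : x < 1) : 0 ≤ 1 - x^2 := by nlinarith

end Helpers

/-- The claim (3.5): there are `c, C > 0` and `K ≥ 1`, depending only on `n`, such that for
`ζ ∈ B_n` with `δ = 1-|ζ| ≤ 1/4`, `k ≥ K`, `2^kδ ≤ 1`, `z ∈ S_ζ` and
`w ∈ S_{ζ_k} \ S_{ζ_{k-1}}` (where `ζ_j = ((1-2^jδ)/(1-δ))ζ`), one has
`|1-⟨w,z⟩| ≈ 2^kδ` and `√△(w,z) ≈ 2^kδ`. -/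
theorem annulus_comparability (n : ℕ) (hn : 1 ≤ n) :
    ∃ c C : ℝ, ∃ K : ℕ, 0 < c ∧ c ≤ C ∧ 1 ≤ K ∧
      ∀ (ζ : En n), ζ ∈ ball (0 : En n) 1 →
        ∀ δ : ℝ, δ = 1 - ‖ζ‖ → 0 < δ → δ ≤ 1 / 4 →
          ∀ k : ℕ, K ≤ k → (2 : ℝ) ^ k * δ ≤ 1 →
            ∀ z ∈ tent ζ,
              ∀ w ∈ tent (((1 - (2 : ℝ) ^ (k : ℤ) * δ) / (1 - δ)) • ζ) \
                      tent (((1 - (2 : ℝ) ^ ((k : ℤ) - 1) * δ) / (1 - δ)) • ζ),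
                (c * ((2 : ℝ) ^ k * δ) ≤ ‖1 - herm w z‖ ∧
                    ‖1 - herm w z‖ ≤ C * ((2 : ℝ) ^ k * δ)) ∧
                  (c * ((2 : ℝ) ^ k * δ) ≤ Real.sqrt (trid w z) ∧
                    Real.sqrt (trid w z) ≤ C * ((2 : ℝ) ^ k * δ)) := by
  refine ⟨1/10, 10, 20, by norm_num, by norm_num, by norm_num, ?_⟩
  intro ζ hζmem δ hδ hδ0 hδ4 k hk hk1 z hz w hw
  rw [mem_ball_zero_iff] at hζmem
  have hζn : ‖ζ‖ = 1 - δ := by linarith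
  have hzp1 : (2:ℝ)^(k:ℤ) = 2^k := zpow_natCast 2 k
  have hzp2 : (2:ℝ)^((k:ℤ)-1) = 2^k / 2 := by
    rw [zpow_sub₀ (by norm_num : (2:ℝ) ≠ 0), zpow_natCast, zpow_one]
  rw [hzp1, hzp2] at hw
  set ρ : ℝ := 2^k * δ with hρdef
  clear_value ρ
  have h2k : (2:ℝ)^20 ≤ 2^k := pow_le_pow_right₀ (by norm_num) hk
  have hρ0 : 0 < ρ := by rw [hρdef]; positivity
  have hρ1 : ρ ≤ 1 := hk1
  have hδρ : δ * 1048576 ≤ ρ := by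
    rw [hρdef]
    linarith [mul_le_mul_of_nonneg_left h2k hδ0.le]
  have hδle : δ ≤ ρ := by linarith
  have h1δ : (0:ℝ) < 1 - δ := by linarith
  have hρ2δ : δ ≤ ρ/2 := by linarith
  -- the half-exponent scalar
  rw [show (2:ℝ)^k/2*δ = ρ/2 by rw [hρdef]; ring] at hw
  obtain ⟨hwk, hwk'⟩ := hw
  -- norms of the dilated centers
  have hnk : ‖((1 - ρ)/(1-δ)) • ζ‖ = 1 - ρ := by
    rw [norm_smul, hζn, Real.norm_eq_abs,
      _root_.abs_of_nonneg (div_nonneg (by linarith) h1δ.le)]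
    field_simp
  have hnk' : ‖((1 - ρ/2)/(1-δ)) • ζ‖ = 1 - ρ/2 := by
    rw [norm_smul, hζn, Real.norm_eq_abs,
      _root_.abs_of_nonneg (div_nonneg (by linarith) h1δ.le)]
    field_simp
  -- tent data
  obtain ⟨hzb, hz2⟩ := tent_lt hz hζmem.le
  rw [hζn] at hz2
  obtain ⟨hwb, hw2⟩ := tent_lt hwk (by rw [hnk]; linarith)
  rw [hnk] at hw2
  have hw3 := not_tent_ge hwk' hwb (by rw [hnk']; linarith)
  rw [hnk'] at hw3
  -- bounds on |herm w ζ|, |herm z ζ|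
  have hXb : ‖herm w ζ‖ ≤ 1 := by
    refine (norm_herm_le w ζ).trans ?_
    exact mul_le_one₀ hwb.le (norm_nonneg ζ) hζmem.le
  -- scalar facts
  have ht1a : (0:ℝ) ≤ 1 - (1 - ρ)/(1-δ) := by
    rw [show 1 - (1 - ρ)/(1-δ) = (ρ-δ)/(1-δ) by field_simp; ring]
    exact div_nonneg (by linarith) h1δ.le
  have ht1b : 1 - (1 - ρ)/(1-δ) ≤ (4/3)*ρ := by
    rw [show 1 - (1 - ρ)/(1-δ) = (ρ-δ)/(1-δ) by field_simp; ring]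
    rw [div_le_iff₀ h1δ]
    exact aux_t_bound hδ0 hδ4 hρ0
  have ht2a : (0:ℝ) ≤ 1 - (1 - ρ/2)/(1-δ) := by
    rw [show 1 - (1 - ρ/2)/(1-δ) = (ρ/2-δ)/(1-δ) by field_simp; ring]
    exact div_nonneg (by linarith) h1δ.le
  have ht2b : 1 - (1 - ρ/2)/(1-δ) ≤ (2/3)*ρ := by
    rw [show 1 - (1 - ρ/2)/(1-δ) = (ρ/2-δ)/(1-δ) by field_simp; ring]
    rw [div_le_iff₀ h1δ]
    have := aux_t_bound hδ0 hδ4 (by linarith : (0:ℝ) < ρ/2)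
    linarith
  -- upper bound on ‖1 - herm w ζ‖
  have hid1 : (1:ℂ) - herm w ζ = (1 - herm w (((1 - ρ)/(1-δ)) • ζ))
      - (((1 - (1 - ρ)/(1-δ) : ℝ)):ℂ) * herm w ζ := by
    rw [herm_smul_right]
    push_cast
    ring
  have haXup : ‖(1:ℂ) - herm w ζ‖ ≤ (10/3)*ρ := by
    have h := norm_sub_le (1 - herm w (((1 - ρ)/(1-δ)) • ζ))
      ((((1 - (1 - ρ)/(1-δ) : ℝ)):ℂ) * herm w ζ)
    rw [← hid1, norm_mul, Complex.norm_real, Real.norm_eq_abs, _root_.abs_of_nonneg ht1a] at h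
    have hm : (1 - (1 - ρ)/(1-δ)) * ‖herm w ζ‖ ≤ (1 - (1 - ρ)/(1-δ)) * 1 :=
      mul_le_mul_of_nonneg_left hXb ht1a
    linarith
  -- lower bound on ‖1 - herm w ζ‖
  have hid2 : (1:ℂ) - herm w (((1 - ρ/2)/(1-δ)) • ζ) = (1 - herm w ζ)
      + (((1 - (1 - ρ/2)/(1-δ) : ℝ)):ℂ) * herm w ζ := by
    rw [herm_smul_right]
    push_cast
    ring
  have haXlow : ρ/3 ≤ ‖(1:ℂ) - herm w ζ‖ := by
    have h := norm_add_le ((1:ℂ) - herm w ζ)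
      ((((1 - (1 - ρ/2)/(1-δ) : ℝ)):ℂ) * herm w ζ)
    rw [← hid2, norm_mul, Complex.norm_real, Real.norm_eq_abs, _root_.abs_of_nonneg ht2a] at h
    have hm : (1 - (1 - ρ/2)/(1-δ)) * ‖herm w ζ‖ ≤ (1 - (1 - ρ/2)/(1-δ)) * 1 :=
      mul_le_mul_of_nonneg_left hXb ht2a
    linarith
  -- the unit vector c in direction ζ
  have hζ0 : (0:ℝ) < ‖ζ‖ := by rw [hζn]; linarith
  obtain ⟨c, hcdef⟩ : ∃ c : En n, c = ‖ζ‖⁻¹ • ζ := ⟨_, rfl⟩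
  have hcn : ‖c‖ = 1 := by
    rw [hcdef, norm_smul, Real.norm_eq_abs, _root_.abs_of_nonneg (inv_nonneg.mpr hζ0.le),
      inv_mul_cancel₀ hζ0.ne']
  have hne : ((1 - δ : ℝ) : ℂ) ≠ 0 := Complex.ofReal_ne_zero.mpr (by linarith)
  have hcw : herm w c = (((1 - δ : ℝ)):ℂ)⁻¹ * herm w ζ := by
    rw [hcdef, herm_smul_right, hζn, Complex.ofReal_inv]
  have hcz' : herm z c = (((1 - δ : ℝ)):ℂ)⁻¹ * herm z ζ := by
    rw [hcdef, herm_smul_right, hζn, Complex.ofReal_inv]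
  have hne' : (1:ℂ) - (δ:ℂ) ≠ 0 := by
    intro h
    apply hne
    push_cast
    linear_combination h
  have hidcw : ((1 - δ : ℝ) : ℂ) * (1 - herm w c) = (1 - herm w ζ) - (δ:ℂ) := by
    rw [hcw]
    push_cast
    field_simp [hne']
    ring
  have hidcz : ((1 - δ : ℝ) : ℂ) * (1 - herm z c) = (1 - herm z ζ) - (δ:ℂ) := by
    rw [hcz']
    push_cast
    field_simp [hne']
    ring
  -- A := ‖1 - herm w c‖ bounds
  have hnormw : (1-δ) * ‖(1:ℂ) - herm w c‖ = ‖(1 - herm w ζ) - (δ:ℂ)‖ := by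
    rw [← hidcw, norm_mul, Complex.norm_real, Real.norm_eq_abs, _root_.abs_of_pos h1δ]
  have hAup : ‖(1:ℂ) - herm w c‖ ≤ 5*ρ := by
    have h1 : ‖(1 - herm w ζ) - (δ:ℂ)‖ ≤ ‖(1:ℂ) - herm w ζ‖ + δ := by
      have := norm_sub_le ((1:ℂ) - herm w ζ) (δ:ℂ)
      rw [Complex.norm_real, Real.norm_eq_abs, _root_.abs_of_pos hδ0] at this
      exact this
    exact aux_scale_up hδ0 hδ4 (norm_nonneg _) hnormw (by linarith) hδρ
  have hAlow : ρ/4 ≤ ‖(1:ℂ) - herm w c‖ := by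
    have h1 : ‖(1:ℂ) - herm w ζ‖ - δ ≤ ‖(1 - herm w ζ) - (δ:ℂ)‖ := by
      have := norm_sub_norm_le ((1:ℂ) - herm w ζ) (δ:ℂ)
      rw [Complex.norm_real, Real.norm_eq_abs, _root_.abs_of_pos hδ0] at this
      exact this
    exact aux_scale_low hδ0 hδ4 (norm_nonneg _) hnormw (by linarith) hδρ
  -- B := ‖1 - herm z c‖ bound
  have hnormz : (1-δ) * ‖(1:ℂ) - herm z c‖ = ‖(1 - herm z ζ) - (δ:ℂ)‖ := by
    rw [← hidcz, norm_mul, Complex.norm_real, Real.norm_eq_abs, _root_.abs_of_pos h1δ]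
  have hBup : ‖(1:ℂ) - herm z c‖ ≤ 4*δ := by
    have h1 : ‖(1 - herm z ζ) - (δ:ℂ)‖ ≤ ‖(1:ℂ) - herm z ζ‖ + δ := by
      have := norm_sub_le ((1:ℂ) - herm z ζ) (δ:ℂ)
      rw [Complex.norm_real, Real.norm_eq_abs, _root_.abs_of_pos hδ0] at this
      exact this
    exact aux_scale_B hδ0 hδ4 (norm_nonneg _) hnormz (by linarith)
  -- cross term
  have hwc : ‖w - c‖ ^ 2 ≤ 2 * ‖(1:ℂ) - herm w c‖ := norm_sub_sq_le' w c hwb.le hcn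
  have hzc : ‖z - c‖ ^ 2 ≤ 2 * ‖(1:ℂ) - herm z c‖ := norm_sub_sq_le' z c hzb.le hcn
  have hE1 : ‖herm (w - c) (z - c)‖ ≤ ‖w - c‖ * ‖z - c‖ := norm_herm_le _ _
  have hEρ : ‖herm (w - c) (z - c)‖ ≤ ρ/100 := by
    have hu2 : ‖w - c‖ ^ 2 ≤ 10*ρ := by linarith
    have hv2 : ‖z - c‖ ^ 2 ≤ 8*δ := by linarith
    have huv : (‖w - c‖ * ‖z - c‖)^2 ≤ 80*ρ*δ := by
      rw [mul_pow]
      calc ‖w - c‖ ^ 2 * ‖z - c‖ ^ 2 ≤ (10*ρ) * (8*δ) :=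
            mul_le_mul hu2 hv2 (sq_nonneg _) (by positivity)
        _ = 80*ρ*δ := by ring
    have hsq : (‖w - c‖ * ‖z - c‖)^2 ≤ (ρ/100)^2 :=
      aux_sq_small hρ0 hδ0 huv hδρ
    have hs : ‖w - c‖ * ‖z - c‖ ≤ ρ/100 := by
      have h := Real.sqrt_le_sqrt hsq
      rwa [Real.sqrt_sq (mul_nonneg (norm_nonneg _) (norm_nonneg _)),
        Real.sqrt_sq (by positivity)] at h
    linarith
  -- triangle decomposition
  have hdec := herm_decomp w z c hcn
  have hcz : ‖(1:ℂ) - herm c z‖ = ‖(1:ℂ) - herm z c‖ := norm_one_sub_herm_comm c z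
  have hNup : ‖(1:ℂ) - herm w z‖ ≤ ‖(1:ℂ) - herm w c‖ + ‖(1:ℂ) - herm z c‖
      + ‖herm (w - c) (z - c)‖ := by
    rw [hdec]
    calc ‖(1 - herm w c) + (1 - herm c z) - herm (w - c) (z - c)‖
        ≤ ‖(1 - herm w c) + (1 - herm c z)‖ + ‖herm (w - c) (z - c)‖ := norm_sub_le _ _
      _ ≤ ‖(1:ℂ) - herm w c‖ + ‖(1:ℂ) - herm c z‖ + ‖herm (w - c) (z - c)‖ := by
          have := norm_add_le ((1:ℂ) - herm w c) ((1:ℂ) - herm c z)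
          linarith
      _ = ‖(1:ℂ) - herm w c‖ + ‖(1:ℂ) - herm z c‖ + ‖herm (w - c) (z - c)‖ := by rw [hcz]
  have hNlow : ‖(1:ℂ) - herm w c‖ ≤ ‖(1:ℂ) - herm w z‖ + ‖(1:ℂ) - herm z c‖
      + ‖herm (w - c) (z - c)‖ := by
    have hid : (1:ℂ) - herm w c = (1 - herm w z) - (1 - herm c z) + herm (w - c) (z - c) := by
      rw [hdec]; ring
    rw [hid]
    calc ‖(1 - herm w z) - (1 - herm c z) + herm (w - c) (z - c)‖
        ≤ ‖(1 - herm w z) - (1 - herm c z)‖ + ‖herm (w - c) (z - c)‖ := norm_add_le _ _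
      _ ≤ ‖(1:ℂ) - herm w z‖ + ‖(1:ℂ) - herm c z‖ + ‖herm (w - c) (z - c)‖ := by
          have := norm_sub_le ((1:ℂ) - herm w z) ((1:ℂ) - herm c z)
          linarith
      _ = ‖(1:ℂ) - herm w z‖ + ‖(1:ℂ) - herm z c‖ + ‖herm (w - c) (z - c)‖ := by rw [hcz]
  -- final bounds on N
  have hNC : ‖(1:ℂ) - herm w z‖ ≤ 10*ρ := by linarith
  have hNc : ρ/5 ≤ ‖(1:ℂ) - herm w z‖ := by linarith
  -- size bounds
  have hP1 : 1 - ‖w‖^2 ≤ 4*ρ := by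
    have h := one_sub_norm_mul_le w (((1 - ρ)/(1-δ)) • ζ)
    rw [hnk] at h
    exact aux_size (norm_nonneg w) hwb hρ0 h (by linarith)
  have hP2 : 1 - ‖z‖^2 ≤ 4*δ := by
    have h := one_sub_norm_mul_le z ζ
    rw [hζn] at h
    exact aux_size (norm_nonneg z) hzb hδ0 h (by linarith)
  have hP0 : (0:ℝ) ≤ (1 - ‖w‖^2) * (1 - ‖z‖^2) := by
    exact mul_nonneg (aux_one_sub_sq (norm_nonneg w) hwb) (aux_one_sub_sq (norm_nonneg z) hzb)
  have htrid : trid w z = ‖(1:ℂ) - herm w z‖^2 - (1 - ‖w‖^2) * (1 - ‖z‖^2) := rfl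
  have hNsq : (ρ/5)^2 ≤ ‖(1:ℂ) - herm w z‖^2 :=
    pow_le_pow_left₀ (by positivity) hNc 2
  have hPle : (1 - ‖w‖^2) * (1 - ‖z‖^2) ≤ 16*ρ*δ := by
    have hz0 : (0:ℝ) ≤ 1 - ‖z‖^2 := aux_one_sub_sq (norm_nonneg z) hzb
    calc (1 - ‖w‖^2) * (1 - ‖z‖^2) ≤ (4*ρ) * (4*δ) :=
          mul_le_mul hP1 hP2 hz0 (by positivity)
      _ = 16*ρ*δ := by ring
  have htlow : (ρ/10)^2 ≤ trid w z := by
    rw [htrid]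
    linarith [mul_le_mul_of_nonneg_left hδρ hρ0.le]
  have htup : trid w z ≤ (10*ρ)^2 := by
    rw [htrid]
    have h2 : ‖(1:ℂ) - herm w z‖^2 ≤ (10*ρ)^2 := pow_le_pow_left₀ (norm_nonneg _) hNC 2
    linarith
  refine ⟨⟨by linarith, by linarith⟩, ?_, ?_⟩
  · calc (1/10) * ρ = Real.sqrt ((ρ/10)^2) := by
          rw [Real.sqrt_sq (by positivity)]; ring
      _ ≤ Real.sqrt (trid w z) := Real.sqrt_le_sqrt htlow
  · calc Real.sqrt (trid w z) ≤ Real.sqrt ((10*ρ)^2) := Real.sqrt_le_sqrt htup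
      _ = 10 * ρ := Real.sqrt_sq (by positivity)
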